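/- arXiv:1507.02750 — 3 statements merged into one kernel-verified Lean document; each statement's English description precedes it below -/
import Mathlib

section
/- Let K ≥ 1, M = (Fin K → Bool), and for an action (i,j) define the signal vectors S⁻_{ij}, S⁰_{ij}, S⁺_{ij} : M → ℝ by S⁻_{ij}(m) = [m_i < m_j], S⁰_{ij}(m) = [m_i = m_j], S⁺_{ij}(m) = [m_i > m_j]. Then for any arms i, j, k, the gain difference vector g_{(i,k)} − g_{(k,j)} (as a function M → ℝ, where g_{(a,b)}(m) = (m_a + m_b)/2) equals (1/2)(S⁺_{ij} − S⁻_{ij}). -/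
/-- Gain of the duel `(a,b)` under binary outcome `m`. -/
noncomputable def gain {K : ℕ} (a b : Fin K) (m : Fin K → Bool) : ℝ :=
  ((if m a then (1:ℝ) else 0) + (if m b then (1:ℝ) else 0)) / 2

/-- Signal vector of action `(i,j)` for the "win" symbol. -/
def Splus {K : ℕ} (i j : Fin K) (m : Fin K → Bool) : ℝ := if m i > m j then 1 else 0

/-- Signal vector of action `(i,j)` for the "loss" symbol. -/
def Sminus {K : ℕ} (i j : Fin K) (m : Fin K → Bool) : ℝ := if m i < m j then 1 else 0

/-- Signal vector of action `(i,j)` for the "tie" symbol. -/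
def Szero {K : ℕ} (i j : Fin K) (m : Fin K → Bool) : ℝ := if m i = m j then 1 else 0

theorem gain_diff_vector_common_arm {K : ℕ} (hK : 1 ≤ K) (i j k : Fin K) :
    (fun m : Fin K → Bool => gain i k m - gain k j m)
      = fun m => (1/2) * (Splus i j m - Sminus i j m) := by
  funext m
  simp only [gain, Splus, Sminus]
  rcases Bool.dichotomy (m i) with hi | hi <;> rcases Bool.dichotomy (m j) with hj | hj <;>
    simp [hi, hj, show ¬(true < false) from by decide] <;> ring
end

section
/- Let K ≥ 2 and M = (Fin K → Bool). For any two actions (i,j) and (i',j') with i ≠ j and i' ≠ j', the gain difference vector g_{(i,j)} − g_{(i',j')} : M → ℝ lies in the real span of the set of indicator vectors {m ↦ [m_a > m_b] : a ≠ b arms} ∪ {m ↦ [m_a = m_b] : a, b arms}, where g_{(a,b)}(m) = (m_a + m_b)/2. -/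
lemma indicator_diff_mem_span {K : ℕ} (a b : Fin K) :
    (fun m : Fin K → Bool => (if m a then (1:ℝ) else 0) - (if m b then (1:ℝ) else 0)) ∈
      Submodule.span ℝ
        ({f : (Fin K → Bool) → ℝ | ∃ a b : Fin K, a ≠ b ∧
            f = fun m => if m a > m b then 1 else 0} ∪
         {f : (Fin K → Bool) → ℝ | ∃ a b : Fin K,
            f = fun m => if m a = m b then 1 else 0}) := by
  by_cases h : a = b
  · subst h
    have : (fun m : Fin K → Bool => (if m a then (1:ℝ) else 0) - (if m a then (1:ℝ) else 0))
        = 0 := by funext m; simp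
    rw [this]; exact Submodule.zero_mem _
  · have key : (fun m : Fin K → Bool => (if m a then (1:ℝ) else 0) - (if m b then (1:ℝ) else 0))
        = (fun m : Fin K → Bool => if m a > m b then (1:ℝ) else 0)
          - (fun m : Fin K → Bool => if m b > m a then (1:ℝ) else 0) := by
      funext m
      simp only [Pi.sub_apply]
      cases hma : m a <;> cases hmb : m b <;> norm_num [Bool.lt_iff]
    rw [key]
    refine sub_mem ?_ ?_
    · exact Submodule.subset_span (Or.inl ⟨a, b, h, rfl⟩)
    · exact Submodule.subset_span (Or.inl ⟨b, a, fun h' => h h'.symm, rfl⟩)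

theorem gain_diff_in_span_of_signals {K : ℕ} (hK : 2 ≤ K)
    (i j i' j' : Fin K) (hij : i ≠ j) (hi'j' : i' ≠ j') :
    (fun m : Fin K → Bool => gain i j m - gain i' j' m) ∈
      Submodule.span ℝ
        ({f : (Fin K → Bool) → ℝ | ∃ a b : Fin K, a ≠ b ∧
            f = fun m => if m a > m b then 1 else 0} ∪
         {f : (Fin K → Bool) → ℝ | ∃ a b : Fin K,
            f = fun m => if m a = m b then 1 else 0}) := by
  have hrepr : (fun m : Fin K → Bool => gain i j m - gain i' j' m)
      = (1/2 : ℝ) •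
        ((fun m : Fin K → Bool => (if m i then (1:ℝ) else 0) - (if m i' then (1:ℝ) else 0))
          + (fun m : Fin K → Bool => (if m j then (1:ℝ) else 0) - (if m j' then (1:ℝ) else 0))) := by
    funext m
    simp only [gain, Pi.smul_apply, Pi.add_apply, smul_eq_mul]
    ring
  rw [hrepr]
  exact Submodule.smul_mem _ _
    (add_mem (indicator_diff_mem_span i i') (indicator_diff_mem_span j j'))
end

section
/- There is no matrix B indexed by pairs of actions such that B·H = G for the binary utility-based dueling bandit problem with K ≥ 1 arms, where H is any real-valued encoding of the three feedback symbols (i.e., H((i,j),m) = f(sign(m_i − m_j)) for some fixed function f from {−1,0,1} to ℝ) and G((i,j),m) = (m_i + m_j)/2. Concretely: there is no family of reals (B_{(i,j),(i',j')}) such that for all actions (i,j) and all outcomes m ∈ {0,1}^K, G((i,j),m) = Σ_{(i',j')} B_{(i,j),(i',j')} · H((i',j'),m). -/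
/-- Three-valued sign of the comparison between the gains of two arms. -/
def duelSign {K : ℕ} (a b : Fin K) (m : Fin K → Bool) : ℝ :=
  if m a > m b then 1 else if m a < m b then -1 else 0

theorem no_linear_transform_of_feedback {K : ℕ} (hK : 1 ≤ K) (f : ℝ → ℝ) :
    ¬ ∃ B : (Fin K × Fin K) → (Fin K × Fin K) → ℝ,
        ∀ (i j : Fin K) (m : Fin K → Bool),
          gain i j m =
            ∑ p : Fin K × Fin K, B (i, j) p * f (duelSign p.1 p.2 m) := by
  rintro ⟨B, h⟩
  have i : Fin K := ⟨0, hK⟩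
  have h0 := h i i (fun _ => false)
  have h1 := h i i (fun _ => true)
  simp [gain, duelSign] at h0 h1
  linarith
end
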